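/- arXiv:2402.13147 — 7 statements merged into one kernel-verified Lean document; each statement's English description precedes it below -/
import Mathlib

section
/- For every function Q : A → ℝ and every probability vector p on A, ∑_{a∈A} p a · (Q a − log (p a)) ≤ log (∑_{a∈A} exp (Q a)). Moreover, the softmax vector p* defined by p* a = exp (Q a) / ∑_{a'∈A} exp (Q a') is a probability vector on A and achieves equality, so the maximum of p ↦ ∑_{a∈A} p a · (Q a − log (p a)) over probability vectors on A equals log (∑_{a∈A} exp (Q a)). -/
open Real Finset

private lemma gibbs_key (x y : ℝ) (hx : 0 ≤ x) (hy : 0 < y) :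
    x * (Real.log y - Real.log x) ≤ y - x := by
  rcases hx.eq_or_lt with h | h
  · simp [← h, hy.le]
  · have hlog : Real.log (y / x) ≤ y / x - 1 :=
      Real.log_le_sub_one_of_pos (div_pos hy h)
    rw [Real.log_div hy.ne' h.ne'] at hlog
    calc x * (Real.log y - Real.log x) ≤ x * (y / x - 1) := by
          exact mul_le_mul_of_nonneg_left hlog h.le
      _ = y - x := by field_simp

/-- For every function `Q : A → ℝ` and every probability vector `p` on a
nonempty finite set `A`, `∑ a, p a * (Q a - log (p a)) ≤ log (∑ a, exp (Q a))`.
Moreover, the softmax vector `p* a = exp (Q a) / ∑ a', exp (Q a')` is a probability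
vector on `A` and achieves equality. -/
theorem softmax_maximizes_entropy_regularized_value
    {A : Type*} [Fintype A] [Nonempty A] (Q : A → ℝ) :
    (∀ p : A → ℝ, (∀ a, 0 ≤ p a) → (∑ a, p a = 1) →
      ∑ a, p a * (Q a - Real.log (p a)) ≤ Real.log (∑ a, Real.exp (Q a))) ∧
    (∀ a, 0 ≤ Real.exp (Q a) / ∑ a', Real.exp (Q a')) ∧
    (∑ a, Real.exp (Q a) / ∑ a', Real.exp (Q a')) = 1 ∧
    (∑ a, (Real.exp (Q a) / ∑ a', Real.exp (Q a')) *
        (Q a - Real.log (Real.exp (Q a) / ∑ a', Real.exp (Q a'))))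
      = Real.log (∑ a, Real.exp (Q a)) := by
  set S := ∑ a, Real.exp (Q a) with hS
  have hSpos : 0 < S := Finset.sum_pos (fun a _ => Real.exp_pos _) univ_nonempty
  have hlogdiv : ∀ a, Real.log (Real.exp (Q a) / S) = Q a - Real.log S := by
    intro a
    rw [Real.log_div (Real.exp_pos _).ne' hSpos.ne', Real.log_exp]
  have hsum1 : (∑ a, Real.exp (Q a) / S) = 1 := by
    rw [← Finset.sum_div, ← hS, div_self hSpos.ne']
  refine ⟨?_, fun a => div_nonneg (Real.exp_pos _).le hSpos.le, hsum1, ?_⟩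
  · intro p hp hp1
    have key : ∀ a ∈ Finset.univ, p a * (Q a - Real.log (p a)) - p a * Real.log S
        ≤ Real.exp (Q a) / S - p a := by
      intro a _
      have := gibbs_key (p a) (Real.exp (Q a) / S) (hp a) (div_pos (Real.exp_pos _) hSpos)
      rw [hlogdiv a] at this
      nlinarith [this]
    have := Finset.sum_le_sum key
    rw [Finset.sum_sub_distrib, Finset.sum_sub_distrib] at this
    have h2 : ∑ a, p a * Real.log S = Real.log S := by
      rw [← Finset.sum_mul, hp1, one_mul]
    rw [h2, hp1, hsum1] at this
    linarith
  · have : ∀ a, (Real.exp (Q a) / S) * (Q a - Real.log (Real.exp (Q a) / S))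
        = (Real.exp (Q a) / S) * Real.log S := by
      intro a; rw [hlogdiv a]; ring
    rw [Finset.sum_congr rfl (fun a _ => this a), ← Finset.sum_mul, hsum1, one_mul]
end

section
/- If a probability vector p on A satisfies ∑_{a∈A} p a · (Q a − log (p a)) = log (∑_{a∈A} exp (Q a)) for a function Q : A → ℝ, then p a = exp (Q a) / ∑_{a'∈A} exp (Q a') for every a ∈ A; i.e., the softmax vector is the unique maximizer of p ↦ ∑_{a∈A} p a · (Q a − log (p a)) over probability vectors on A. -/
/-- If a probability vector `p` on a nonempty finite set `A` satisfies
`∑ a, p a * (Q a - log (p a)) = log (∑ a, exp (Q a))` for a function `Q : A → ℝ`,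
then `p a = exp (Q a) / ∑ a', exp (Q a')` for every `a`; i.e. the softmax vector is
the unique maximizer. -/
theorem softmax_unique_maximizer
    {A : Type*} [Fintype A] [Nonempty A] (Q : A → ℝ) (p : A → ℝ)
    (hp0 : ∀ a, 0 ≤ p a) (hp1 : ∑ a, p a = 1)
    (heq : ∑ a, p a * (Q a - Real.log (p a)) = Real.log (∑ a, Real.exp (Q a))) :
    ∀ a, p a = Real.exp (Q a) / ∑ a', Real.exp (Q a') := by
  set Z := ∑ a', Real.exp (Q a') with hZ
  have hZpos : 0 < Z := Finset.sum_pos (fun a _ => Real.exp_pos _) Finset.univ_nonempty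
  set q : A → ℝ := fun a => Real.exp (Q a) / Z with hq
  have hqpos : ∀ a, 0 < q a := fun a => div_pos (Real.exp_pos _) hZpos
  have hlogq : ∀ a, Real.log (q a) = Q a - Real.log Z := fun a => by
    rw [hq]
    simp [Real.log_div (Real.exp_ne_zero _) (ne_of_gt hZpos), Real.log_exp]
  have hsum0 : ∑ a, p a * (Real.log (q a) - Real.log (p a)) = 0 := by
    have h1 : ∑ a, p a * (Real.log (q a) - Real.log (p a))
        = ∑ a, p a * (Q a - Real.log (p a)) - (∑ a, p a) * Real.log Z := by
      rw [Finset.sum_mul, ← Finset.sum_sub_distrib]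
      apply Finset.sum_congr rfl
      intro a _
      rw [hlogq]; ring
    rw [h1, hp1, heq, one_mul, sub_self]
  have hle : ∀ a ∈ Finset.univ, p a * (Real.log (q a) - Real.log (p a)) ≤ q a - p a := by
    intro a _
    rcases eq_or_lt_of_le (hp0 a) with h | h
    · simp [← h]
      exact le_of_lt (hqpos a)
    · have hr : Real.log (q a) - Real.log (p a) = Real.log (q a / p a) :=
        (Real.log_div (ne_of_gt (hqpos a)) (ne_of_gt h)).symm
      rw [hr]
      calc p a * Real.log (q a / p a) ≤ p a * (q a / p a - 1) :=
            mul_le_mul_of_nonneg_left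
              (Real.log_le_sub_one_of_pos (div_pos (hqpos a) h)) (le_of_lt h)
        _ = q a - p a := by field_simp
  have hsumq : ∑ a, (q a - p a) = 0 := by
    rw [Finset.sum_sub_distrib, hp1]
    have hq1 : ∑ a, q a = 1 := by
      rw [hq]
      simp only
      rw [← Finset.sum_div, ← hZ, div_self (ne_of_gt hZpos)]
    rw [hq1]; ring
  have heach := (Finset.sum_eq_sum_iff_of_le hle).mp (by rw [hsum0, hsumq])
  intro a
  have hea := heach a (Finset.mem_univ a)
  rcases eq_or_lt_of_le (hp0 a) with h | h
  · exfalso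
    rw [← h] at hea
    simp at hea
    exact absurd hea.symm (ne_of_gt (hqpos a))
  · by_contra hne
    have hne' : q a / p a ≠ 1 := by
      intro hcontra
      apply hne
      field_simp at hcontra
      exact hcontra.symm
    have hlt : Real.log (q a / p a) < q a / p a - 1 :=
      Real.log_lt_sub_one_of_pos (div_pos (hqpos a) h) hne'
    have hr : Real.log (q a) - Real.log (p a) = Real.log (q a / p a) :=
      (Real.log_div (ne_of_gt (hqpos a)) (ne_of_gt h)).symm
    rw [hr] at hea
    have : p a * Real.log (q a / p a) < p a * (q a / p a - 1) :=
      mul_lt_mul_of_pos_left hlt h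
    rw [hea] at this
    have heq2 : p a * (q a / p a - 1) = q a - p a := by field_simp
    rw [heq2] at this
    exact lt_irrefl _ this
end

section
/- For every fixed policy π, the function Q ↦ H(Q,π) is concave on all of S × A → ℝ (ConcaveOn ℝ univ). -/
/-- Soft value `V[Q,π](s) = ∑ a, π s a * (Q (s,a) - log (π s a))`. -/
noncomputable def softV {S A : Type*} [Fintype A]
    (Q : S × A → ℝ) (pol : S → A → ℝ) (s : S) : ℝ :=
  ∑ a, pol s a * (Q (s, a) - Real.log (pol s a))

/-- `W[Q,π](s,a) = γ * ∑ s', P s a s' * V[Q,π](s')`. -/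
noncomputable def softW {S A : Type*} [Fintype S] [Fintype A]
    (P : S → A → S → ℝ) (γ : ℝ) (Q : S × A → ℝ) (pol : S → A → ℝ) (s : S) (a : A) : ℝ :=
  γ * ∑ s', P s a s' * softV Q pol s'

/-- The objective `H(Q,π)`. -/
noncomputable def Hobj {S A : Type*} [Fintype S] [Fintype A]
    (P : S → A → S → ℝ) (γ : ℝ) (ρ : S × A → ℝ) (μ0 : S → ℝ)
    (rbar : S × A → ℝ) (α : ℝ) (Q : S × A → ℝ) (pol : S → A → ℝ) : ℝ :=
  ∑ sa : S × A, ρ sa * (Q sa - softW P γ Q pol sa.1 sa.2)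
    - (1 - γ) * ∑ s, μ0 s * softV Q pol s
    - α * ∑ sa : S × A, ρ sa * (Q sa - rbar sa - softW P γ Q pol sa.1 sa.2) ^ 2

/-- The modified objective `Ĥ(Q,π)`. -/
noncomputable def Hhat {S A : Type*} [Fintype S] [Fintype A]
    (P : S → A → S → ℝ) (γ : ℝ) (ρ : S × A → ℝ) (μ0 : S → ℝ)
    (rbar : S × A → ℝ) (α : ℝ) (Q : S × A → ℝ) (pol : S → A → ℝ) : ℝ :=
  ∑ sa : S × A, ρ sa * (Q sa - softW P γ Q pol sa.1 sa.2)
    - (1 - γ) * ∑ s, μ0 s * softV Q pol s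
    - α * ∑ sa : S × A, ρ sa * ((Q sa - rbar sa) ^ 2 + (softW P γ Q pol sa.1 sa.2) ^ 2
        + 2 * max 0 (rbar sa - Q sa) * softW P γ Q pol sa.1 sa.2)

lemma softV_combo {S A : Type*} [Fintype A]
    (Q1 Q2 : S × A → ℝ) (pol : S → A → ℝ) {a b : ℝ} (hab : a + b = 1) (s : S) :
    softV (a • Q1 + b • Q2) pol s = a * softV Q1 pol s + b * softV Q2 pol s := by
  simp only [softV, Finset.mul_sum, ← Finset.sum_add_distrib, Pi.add_apply, Pi.smul_apply,
    smul_eq_mul]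
  refine Finset.sum_congr rfl fun x _ => ?_
  linear_combination pol s x * Real.log (pol s x) * hab

lemma softW_combo {S A : Type*} [Fintype S] [Fintype A]
    (P : S → A → S → ℝ) (γ : ℝ) (Q1 Q2 : S × A → ℝ) (pol : S → A → ℝ)
    {a b : ℝ} (hab : a + b = 1) (s : S) (aa : A) :
    softW P γ (a • Q1 + b • Q2) pol s aa
      = a * softW P γ Q1 pol s aa + b * softW P γ Q2 pol s aa := by
  simp only [softW, softV_combo Q1 Q2 pol hab]
  have : ∑ s', P s aa s' * (a * softV Q1 pol s' + b * softV Q2 pol s')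
      = a * ∑ s', P s aa s' * softV Q1 pol s' + b * ∑ s', P s aa s' * softV Q2 pol s' := by
    rw [Finset.mul_sum, Finset.mul_sum, ← Finset.sum_add_distrib]
    exact Finset.sum_congr rfl fun _ _ => by ring
  rw [this]; ring

/-- For every fixed policy `π`, the map `Q ↦ H(Q,π)` is concave on all of
`S × A → ℝ`. -/
theorem Hobj_concaveOn_Q
    {S A : Type*} [Fintype S] [Fintype A] [Nonempty S] [Nonempty A]
    (P : S → A → S → ℝ) (hP0 : ∀ s a s', 0 ≤ P s a s') (hP1 : ∀ s a, ∑ s', P s a s' = 1)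
    (γ : ℝ) (hγ0 : 0 ≤ γ) (hγ1 : γ < 1)
    (ρ : S × A → ℝ) (hρ : ∀ sa, 0 ≤ ρ sa)
    (μ0 : S → ℝ) (hμ0 : ∀ s, 0 ≤ μ0 s)
    (rbar : S × A → ℝ) (α : ℝ) (hα : 0 ≤ α)
    (pol : S → A → ℝ) (hpol0 : ∀ s a, 0 ≤ pol s a) (hpol1 : ∀ s, ∑ a, pol s a = 1) :
    ConcaveOn ℝ Set.univ (fun Q : S × A → ℝ => Hobj P γ ρ μ0 rbar α Q pol) := by
  refine ⟨convex_univ, fun Q1 _ Q2 _ a b ha hb hab => ?_⟩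
  have hW : ∀ sa : S × A, softW P γ (a • Q1 + b • Q2) pol sa.1 sa.2
      = a * softW P γ Q1 pol sa.1 sa.2 + b * softW P γ Q2 pol sa.1 sa.2 :=
    fun sa => softW_combo P γ Q1 Q2 pol hab sa.1 sa.2
  have hQ : ∀ sa : S × A, (a • Q1 + b • Q2) sa = a * Q1 sa + b * Q2 sa := fun sa => by
    simp [smul_eq_mul]
  simp only [Hobj, smul_eq_mul, hW, hQ, softV_combo Q1 Q2 pol hab]
  have hs1 : ∑ sa : S × A, ρ sa * (a * Q1 sa + b * Q2 sa
        - (a * softW P γ Q1 pol sa.1 sa.2 + b * softW P γ Q2 pol sa.1 sa.2))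
      = a * ∑ sa : S × A, ρ sa * (Q1 sa - softW P γ Q1 pol sa.1 sa.2)
        + b * ∑ sa : S × A, ρ sa * (Q2 sa - softW P γ Q2 pol sa.1 sa.2) := by
    rw [Finset.mul_sum, Finset.mul_sum, ← Finset.sum_add_distrib]
    exact Finset.sum_congr rfl fun _ _ => by ring
  have hs2 : ∑ s, μ0 s * (a * softV Q1 pol s + b * softV Q2 pol s)
      = a * ∑ s, μ0 s * softV Q1 pol s + b * ∑ s, μ0 s * softV Q2 pol s := by
    rw [Finset.mul_sum, Finset.mul_sum, ← Finset.sum_add_distrib]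
    exact Finset.sum_congr rfl fun _ _ => by ring
  have hs3 : ∑ sa : S × A, ρ sa * (a * Q1 sa + b * Q2 sa - rbar sa
        - (a * softW P γ Q1 pol sa.1 sa.2 + b * softW P γ Q2 pol sa.1 sa.2)) ^ 2
      ≤ a * ∑ sa : S × A, ρ sa * (Q1 sa - rbar sa - softW P γ Q1 pol sa.1 sa.2) ^ 2
        + b * ∑ sa : S × A, ρ sa * (Q2 sa - rbar sa - softW P γ Q2 pol sa.1 sa.2) ^ 2 := by
    rw [Finset.mul_sum, Finset.mul_sum, ← Finset.sum_add_distrib]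
    refine Finset.sum_le_sum fun sa _ => ?_
    have key : (a * Q1 sa + b * Q2 sa - rbar sa
          - (a * softW P γ Q1 pol sa.1 sa.2 + b * softW P γ Q2 pol sa.1 sa.2)) ^ 2
        ≤ a * (Q1 sa - rbar sa - softW P γ Q1 pol sa.1 sa.2) ^ 2
          + b * (Q2 sa - rbar sa - softW P γ Q2 pol sa.1 sa.2) ^ 2 := by
      obtain rfl : b = 1 - a := by linarith
      nlinarith [sq_nonneg ((Q1 sa - rbar sa - softW P γ Q1 pol sa.1 sa.2)
        - (Q2 sa - rbar sa - softW P γ Q2 pol sa.1 sa.2)), mul_nonneg ha hb]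
    calc ρ sa * (a * Q1 sa + b * Q2 sa - rbar sa
          - (a * softW P γ Q1 pol sa.1 sa.2 + b * softW P γ Q2 pol sa.1 sa.2)) ^ 2
        ≤ ρ sa * (a * (Q1 sa - rbar sa - softW P γ Q1 pol sa.1 sa.2) ^ 2
          + b * (Q2 sa - rbar sa - softW P γ Q2 pol sa.1 sa.2) ^ 2) :=
          mul_le_mul_of_nonneg_left key (hρ sa)
      _ = a * (ρ sa * (Q1 sa - rbar sa - softW P γ Q1 pol sa.1 sa.2) ^ 2)
          + b * (ρ sa * (Q2 sa - rbar sa - softW P γ Q2 pol sa.1 sa.2) ^ 2) := by ring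
  have hs3' := mul_le_mul_of_nonneg_left hs3 hα
  rw [hs1, hs2]
  nlinarith [hs3']
end

section
/- There exist nonempty finite sets S and A, a transition kernel P, a discount factor γ with 0 < γ < 1, weight functions ρ ≥ 0 and μ0 ≥ 0, a reference reward r̄, a real α > 0, and Q : S × A → ℝ such that the map π ↦ H(Q,π) is not convex on the convex set of policies {π : S → A → ℝ | 0 ≤ π s a for all s, a, and ∑_{a∈A} π s a = 1 for all s}. -/
/-- There exist nonempty finite sets `S = Fin m`, `A = Fin n`, a transition
kernel `P`, a discount factor `0 < γ < 1`, nonnegative weights `ρ, μ0`, a reference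
reward `r̄`, `α > 0`, and `Q` such that `π ↦ H(Q,π)` is not convex on the convex set of
policies. -/
theorem Hobj_not_convexOn_pi :
    ∃ (m n : ℕ), 0 < m ∧ 0 < n ∧
    ∃ (P : Fin m → Fin n → Fin m → ℝ), (∀ s a s', 0 ≤ P s a s') ∧ (∀ s a, ∑ s', P s a s' = 1) ∧
    ∃ (γ : ℝ), 0 < γ ∧ γ < 1 ∧
    ∃ (ρ : Fin m × Fin n → ℝ), (∀ sa, 0 ≤ ρ sa) ∧
    ∃ (μ0 : Fin m → ℝ), (∀ s, 0 ≤ μ0 s) ∧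
    ∃ (rbar : Fin m × Fin n → ℝ) (α : ℝ), 0 < α ∧
    ∃ (Q : Fin m × Fin n → ℝ),
      ¬ ConvexOn ℝ
          {pol : Fin m → Fin n → ℝ | (∀ s a, 0 ≤ pol s a) ∧ (∀ s, ∑ a, pol s a = 1)}
          (fun pol => Hobj P γ ρ μ0 rbar α Q pol) := by
  refine ⟨1, 2, one_pos, two_pos, fun _ _ _ => 1, fun _ _ _ => zero_le_one,
    fun _ _ => by simp, 1/2, by norm_num, by norm_num, fun _ => 1, fun _ => zero_le_one,
    fun _ => 0, fun _ => le_refl 0, fun _ => -1, 1, one_pos, fun _ => 0, ?_⟩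
  intro h
  set p1 : Fin 1 → Fin 2 → ℝ := fun _ a => if a = 0 then 1 else 0 with hp1
  set p2 : Fin 1 → Fin 2 → ℝ := fun _ a => if a = 0 then 0 else 1 with hp2
  have m1 : p1 ∈ {pol : Fin 1 → Fin 2 → ℝ | (∀ s a, 0 ≤ pol s a) ∧ (∀ s, ∑ a, pol s a = 1)} := by
    constructor
    · intro s a; by_cases ha : a = 0 <;> simp [hp1, ha]
    · intro s; simp [hp1, Fin.sum_univ_two]
  have m2 : p2 ∈ {pol : Fin 1 → Fin 2 → ℝ | (∀ s a, 0 ≤ pol s a) ∧ (∀ s, ∑ a, pol s a = 1)} := by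
    constructor
    · intro s a; by_cases ha : a = 0 <;> simp [hp2, ha]
    · intro s; simp [hp2, Fin.sum_univ_two]
  have key := h.2 m1 m2 (by norm_num : (0:ℝ) ≤ 1/2) (by norm_num : (0:ℝ) ≤ 1/2) (by norm_num)
  have hmid : (1/2 : ℝ) • p1 + (1/2 : ℝ) • p2 = fun (_ : Fin 1) (a : Fin 2) => (1/2 : ℝ) := by
    funext s a
    by_cases ha : a = 0 <;> simp [hp1, hp2, ha] <;> norm_num
  rw [hmid] at key
  have hV1 : softV (fun (_ : Fin 1 × Fin 2) => (0:ℝ)) p1 = fun _ => 0 := by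
    funext s; simp [softV, hp1, Fin.sum_univ_two]
  have hV2 : softV (fun (_ : Fin 1 × Fin 2) => (0:ℝ)) p2 = fun _ => 0 := by
    funext s; simp [softV, hp2, Fin.sum_univ_two]
  have hVm : softV (fun (_ : Fin 1 × Fin 2) => (0:ℝ))
      (fun (_ : Fin 1) (_ : Fin 2) => (1/2 : ℝ)) = fun _ => Real.log 2 := by
    funext s
    simp only [softV, Fin.sum_univ_two]
    rw [show Real.log (1/2) = - Real.log 2 by
      rw [one_div, Real.log_inv]]
    ring
  simp only [Hobj, softW, hV1, hV2, hVm, Fintype.sum_prod_type, Fin.sum_univ_two,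
    Fin.sum_univ_one] at key
  have hl2 : Real.log 2 < 0.6931471808 := Real.log_two_lt_d9
  have hl2' : 0 < Real.log 2 := Real.log_pos (by norm_num)
  simp only [smul_eq_mul] at key
  nlinarith [key, hl2, hl2']
end

section
/- There exist nonempty finite sets S and A, a transition kernel P, a discount factor γ with 0 < γ < 1, weight functions ρ ≥ 0 and μ0 ≥ 0, a reference reward r̄, a real α > 0, and Q : S × A → ℝ with 0 ≤ Q, such that, letting πQ be the softmax policy πQ s a = exp (Q(s,a)) / ∑_{a'∈A} exp (Q(s,a')) (which satisfies V[Q,πQ](s) ≥ V[Q,π](s) for every policy π and every state s), there is a policy π with H(Q,π) < H(Q,πQ); i.e., H(Q,·) is not minimized over policies at the policy that pointwise maximizes the soft value V. -/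
lemma entropy_term_le (p : ℝ) (hp : 0 ≤ p) :
    p * (0 - Real.log p) ≤ 1/2 - p + p * Real.log 2 := by
  rcases eq_or_lt_of_le hp with h | h
  · rw [← h]; norm_num
  · have h2 : (0:ℝ) < 2 * p := by linarith
    have hlog : Real.log (1 / (2 * p)) ≤ 1 / (2 * p) - 1 :=
      Real.log_le_sub_one_of_pos (by positivity)
    have hsplit : Real.log (1 / (2 * p)) = - Real.log 2 - Real.log p := by
      rw [Real.log_div one_ne_zero (ne_of_gt h2), Real.log_mul two_ne_zero (ne_of_gt h)]
      ring_nf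
      simp
    have h3 : 0 - Real.log p ≤ 1 / (2 * p) - 1 + Real.log 2 := by
      rw [hsplit] at hlog; linarith
    have h4 := mul_le_mul_of_nonneg_left h3 hp
    have hinv : p * (1 / (2 * p)) = 1 / 2 := by field_simp
    nlinarith

/-- There exist nonempty finite sets `S = Fin m`, `A = Fin n`, a transition
kernel, `0 < γ < 1`, nonnegative weights, a reference reward, `α > 0`, and `Q ≥ 0` such
that, letting `πQ` be the softmax policy (which pointwise maximizes the soft value `V`),
some policy `π` satisfies `H(Q,π) < H(Q,πQ)`. -/
theorem Hobj_not_minimized_at_softmax :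
    ∃ (m n : ℕ), 0 < m ∧ 0 < n ∧
    ∃ (P : Fin m → Fin n → Fin m → ℝ), (∀ s a s', 0 ≤ P s a s') ∧ (∀ s a, ∑ s', P s a s' = 1) ∧
    ∃ (γ : ℝ), 0 < γ ∧ γ < 1 ∧
    ∃ (ρ : Fin m × Fin n → ℝ), (∀ sa, 0 ≤ ρ sa) ∧
    ∃ (μ0 : Fin m → ℝ), (∀ s, 0 ≤ μ0 s) ∧
    ∃ (rbar : Fin m × Fin n → ℝ) (α : ℝ), 0 < α ∧
    ∃ (Q : Fin m × Fin n → ℝ), (∀ sa, 0 ≤ Q sa) ∧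
      (∀ pol : Fin m → Fin n → ℝ, (∀ s a, 0 ≤ pol s a) → (∀ s, ∑ a, pol s a = 1) →
        ∀ s, softV Q pol s ≤
          softV Q (fun s a => Real.exp (Q (s, a)) / ∑ a', Real.exp (Q (s, a'))) s) ∧
      ∃ (pol : Fin m → Fin n → ℝ), (∀ s a, 0 ≤ pol s a) ∧ (∀ s, ∑ a, pol s a = 1) ∧
        Hobj P γ ρ μ0 rbar α Q pol <
          Hobj P γ ρ μ0 rbar α Q
            (fun s a => Real.exp (Q (s, a)) / ∑ a', Real.exp (Q (s, a'))) := by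
  
  refine ⟨1, 2, one_pos, two_pos, fun _ _ _ => 1, fun _ _ _ => zero_le_one,
    fun _ _ => by simp, 1/2, by norm_num, by norm_num,
    fun _ => 1, fun _ => zero_le_one, fun _ => 0, fun _ => le_refl 0,
    fun _ => -10, 1, one_pos, fun _ => 0, fun _ => le_refl 0, ?_, ?_⟩
  · -- softmax maximizes V
    intro pol hpos hsum s
    have key := fun a => entropy_term_le (pol s a) (hpos s a)
    have hS := hsum s
    rw [Fin.sum_univ_two] at hS
    simp only [softV, Fin.sum_univ_two, Real.exp_zero]
    norm_num
    rw [show ((1:ℝ)/2) = 2⁻¹ by norm_num, Real.log_inv]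
    have k0 := key 0
    have k1 := key 1
    have hL : pol s 0 * Real.log 2 + pol s 1 * Real.log 2 = Real.log 2 := by
      rw [← add_mul, hS, one_mul]
    ring_nf at k0 k1 ⊢
    linarith
  · -- the deterministic policy beats softmax
    refine ⟨fun _ a => if a = 0 then 1 else 0, fun s a => by positivity,
      fun s => by simp, ?_⟩
    have hVdet : softV (fun _ => (0:ℝ)) (fun (_ : Fin 1) (a : Fin 2) => if a = 0 then (1:ℝ) else 0)
        (0 : Fin 1) = 0 := by
      simp [softV, Fin.sum_univ_two]
    have hVsm : softV (fun _ => (0:ℝ))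
        (fun (s : Fin 1) (a : Fin 2) => Real.exp 0 / (Real.exp 0 + Real.exp 0))
        (0 : Fin 1) = Real.log 2 := by
      simp [softV, Fin.sum_univ_two, Real.exp_zero, Real.log_inv]
      norm_num
      ring
    simp only [Hobj, softW, Fintype.sum_prod_type, Fin.sum_univ_one, Fin.sum_univ_two,
      Fin.isValue]
    rw [hVdet, hVsm]
    have h1 : (0:ℝ) < Real.log 2 := Real.log_pos (by norm_num)
    have h2 : Real.log 2 < 1 := by have := Real.log_two_lt_d9; linarith
    nlinarith
end

section
/- For every Q : S × A → ℝ with 0 ≤ Q(s,a) for all (s,a) and every policy π, Ĥ(Q,π) ≤ H(Q,π). -/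
/-- For every `Q ≥ 0` and every policy `π`, `Ĥ(Q,π) ≤ H(Q,π)`. -/
theorem Hhat_le_Hobj
    {S A : Type*} [Fintype S] [Fintype A] [Nonempty S] [Nonempty A]
    (P : S → A → S → ℝ) (hP0 : ∀ s a s', 0 ≤ P s a s') (hP1 : ∀ s a, ∑ s', P s a s' = 1)
    (γ : ℝ) (hγ0 : 0 ≤ γ) (hγ1 : γ < 1)
    (ρ : S × A → ℝ) (hρ : ∀ sa, 0 ≤ ρ sa)
    (μ0 : S → ℝ) (hμ0 : ∀ s, 0 ≤ μ0 s)
    (rbar : S × A → ℝ) (α : ℝ) (hα : 0 ≤ α)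
    (Q : S × A → ℝ) (hQ : ∀ sa, 0 ≤ Q sa)
    (pol : S → A → ℝ) (hpol0 : ∀ s a, 0 ≤ pol s a) (hpol1 : ∀ s, ∑ a, pol s a = 1) :
    Hhat P γ ρ μ0 rbar α Q pol ≤ Hobj P γ ρ μ0 rbar α Q pol := by
  have hV : ∀ s, 0 ≤ softV Q pol s := by
    intro s
    apply Finset.sum_nonneg
    intro a _
    have hle1 : pol s a ≤ 1 := by
      have := Finset.single_le_sum (f := fun a => pol s a)
        (fun i _ => hpol0 s i) (Finset.mem_univ a)
      linarith [hpol1 s]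
    have hlog : Real.log (pol s a) ≤ 0 := Real.log_nonpos (hpol0 s a) hle1
    have := hQ (s, a)
    nlinarith [hpol0 s a]
  have hW : ∀ s a, 0 ≤ softW P γ Q pol s a := by
    intro s a
    apply mul_nonneg hγ0
    exact Finset.sum_nonneg fun s' _ => mul_nonneg (hP0 s a s') (hV s')
  unfold Hhat Hobj
  have key : α * ∑ sa : S × A, ρ sa * (Q sa - rbar sa - softW P γ Q pol sa.1 sa.2) ^ 2
      ≤ α * ∑ sa : S × A, ρ sa * ((Q sa - rbar sa) ^ 2 + (softW P γ Q pol sa.1 sa.2) ^ 2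
        + 2 * max 0 (rbar sa - Q sa) * softW P γ Q pol sa.1 sa.2) := by
    apply mul_le_mul_of_nonneg_left _ hα
    apply Finset.sum_le_sum
    intro sa _
    apply mul_le_mul_of_nonneg_left _ (hρ sa)
    have hWsa := hW sa.1 sa.2
    have hmax : rbar sa - Q sa ≤ max 0 (rbar sa - Q sa) := le_max_right _ _
    nlinarith [mul_le_mul_of_nonneg_right hmax hWsa]
  linarith
end

section
/- For every Q : S × A → ℝ with 0 ≤ Q(s,a) for all (s,a), the softmax policy πQ defined by πQ s a = exp (Q(s,a)) / ∑_{a'∈A} exp (Q(s,a')) is a policy and satisfies Ĥ(Q,πQ) ≤ Ĥ(Q,π) for every policy π. If in addition μ0(s) > 0 for every s ∈ S, then πQ is the unique policy minimizing π ↦ Ĥ(Q,π): any policy π ≠ πQ satisfies Ĥ(Q,πQ) < Ĥ(Q,π). -/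
/-!
For fixed `Q`, `Ĥ(Q, π)` depends on `π` only through the soft values `V[Q,π]`, and it is
antitone in them as long as they are nonnegative: `W` is a nonnegative monotone image of `V`,
and every term of the penalty is monotone in a nonnegative `W`. Gibbs' variational principle
says that `V[Q,π](s) ≤ log ∑ₐ exp Q(s,a)`, with equality exactly at the softmax policy;
the gap is a sum of `klFun` terms, which is positive as soon as `π s` differs from the softmax.
Since `Q ≥ 0` makes every `V[Q,π]` nonnegative, the softmax policy minimizes `Ĥ(Q, ·)`, and the
`μ0`-term makes the inequality strict when `μ0 > 0`.
-/

open Real Finset InformationTheory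

section Softmax

variable {A : Type*} [Fintype A]

noncomputable def softmax (q : A → ℝ) (a : A) : ℝ :=
  exp (q a) / ∑ a', exp (q a')

variable [Nonempty A]

lemma sum_exp_pos (q : A → ℝ) : 0 < ∑ a, exp (q a) :=
  sum_pos (fun _ _ => exp_pos _) univ_nonempty

lemma softmax_pos (q : A → ℝ) (a : A) : 0 < softmax q a :=
  div_pos (exp_pos _) (sum_exp_pos q)

lemma sum_softmax (q : A → ℝ) : ∑ a, softmax q a = 1 := by
  simp only [softmax, ← sum_div, div_self (sum_exp_pos q).ne']

lemma log_softmax (q : A → ℝ) (a : A) :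
    log (softmax q a) = q a - log (∑ a', exp (q a')) := by
  rw [softmax, log_div (exp_ne_zero _) (sum_exp_pos q).ne', log_exp]

end Softmax

lemma mul_log_sub_log_eq_sub_sub_mul_klFun {p w : ℝ} (hp : 0 ≤ p) (hw : 0 < w) :
    p * (log w - log p) = w - p - w * klFun (p / w) := by
  rcases hp.eq_or_lt with rfl | hp
  · simp [klFun_zero]
  · rw [klFun_apply, log_div hp.ne' hw.ne']
    field_simp
    ring

section Gibbs

variable {A : Type*} [Fintype A] [Nonempty A] (q : A → ℝ) {p : A → ℝ}

theorem sum_mul_sub_log_eq_log_sum_exp_sub (hp : ∀ a, 0 ≤ p a) (hp1 : ∑ a, p a = 1) :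
    ∑ a, p a * (q a - log (p a))
      = log (∑ a, exp (q a)) - ∑ a, softmax q a * klFun (p a / softmax q a) := by
  have hterm : ∀ a, p a * (q a - log (p a)) = p a * log (∑ a', exp (q a'))
      + (softmax q a - p a - softmax q a * klFun (p a / softmax q a)) := fun a => by
    rw [← mul_log_sub_log_eq_sub_sub_mul_klFun (hp a) (softmax_pos q a), log_softmax]
    ring
  simp only [hterm, sum_add_distrib, sum_sub_distrib, ← sum_mul, hp1, sum_softmax]
  ring

theorem sum_softmax_mul_sub_log :
    ∑ a, softmax q a * (q a - log (softmax q a)) = log (∑ a, exp (q a)) := by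
  rw [sum_mul_sub_log_eq_log_sum_exp_sub q (fun a => (softmax_pos q a).le) (sum_softmax q)]
  simp [div_self (softmax_pos q _).ne', klFun_one]

theorem sum_mul_sub_log_le_log_sum_exp (hp : ∀ a, 0 ≤ p a) (hp1 : ∑ a, p a = 1) :
    ∑ a, p a * (q a - log (p a)) ≤ log (∑ a, exp (q a)) := by
  rw [sum_mul_sub_log_eq_log_sum_exp_sub q hp hp1, sub_le_self_iff]
  exact sum_nonneg fun a _ =>
    mul_nonneg (softmax_pos q a).le (klFun_nonneg (div_nonneg (hp a) (softmax_pos q a).le))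

theorem sum_mul_sub_log_lt_log_sum_exp (hp : ∀ a, 0 ≤ p a) (hp1 : ∑ a, p a = 1)
    (hne : p ≠ softmax q) :
    ∑ a, p a * (q a - log (p a)) < log (∑ a, exp (q a)) := by
  obtain ⟨a₀, ha₀⟩ := Function.ne_iff.mp hne
  have hkl : ∀ a, 0 ≤ klFun (p a / softmax q a) := fun a =>
    klFun_nonneg (div_nonneg (hp a) (softmax_pos q a).le)
  have hkl₀ : klFun (p a₀ / softmax q a₀) ≠ 0 := by
    rw [Ne, klFun_eq_zero_iff (div_nonneg (hp a₀) (softmax_pos q a₀).le),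
      div_eq_one_iff_eq (softmax_pos q a₀).ne']
    exact ha₀
  rw [sum_mul_sub_log_eq_log_sum_exp_sub q hp hp1, sub_lt_self_iff]
  exact sum_pos' (fun a _ => mul_nonneg (softmax_pos q a).le (hkl a))
    ⟨a₀, mem_univ _, mul_pos (softmax_pos q a₀) ((hkl a₀).lt_of_ne' hkl₀)⟩

omit [Nonempty A] in
lemma sum_mul_sub_log_nonneg (hq : ∀ a, 0 ≤ q a) (hp : ∀ a, 0 ≤ p a)
    (hp1 : ∑ a, p a = 1) :
    0 ≤ ∑ a, p a * (q a - log (p a)) := by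
  refine sum_nonneg fun a _ => ?_
  have hp_le : p a ≤ 1 := hp1 ▸ single_le_sum (fun i _ => hp i) (mem_univ a)
  have hentropy := negMulLog_nonneg (hp a) hp_le
  rw [negMulLog] at hentropy
  nlinarith [mul_nonneg (hp a) (hq a)]

end Gibbs

section Objective

variable {S A : Type*} [Fintype S] [Fintype A] {P : S → A → S → ℝ} {γ : ℝ}
  {Q : S × A → ℝ} {pol₁ pol₂ : S → A → ℝ}

lemma softW_nonneg (hP0 : ∀ s a s', 0 ≤ P s a s') (hγ0 : 0 ≤ γ)
    (hV : ∀ s, 0 ≤ softV Q pol₁ s) (s : S) (a : A) : 0 ≤ softW P γ Q pol₁ s a :=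
  mul_nonneg hγ0 (sum_nonneg fun s' _ => mul_nonneg (hP0 s a s') (hV s'))

lemma softW_mono (hP0 : ∀ s a s', 0 ≤ P s a s') (hγ0 : 0 ≤ γ)
    (hV : ∀ s, softV Q pol₁ s ≤ softV Q pol₂ s) (s : S) (a : A) :
    softW P γ Q pol₁ s a ≤ softW P γ Q pol₂ s a :=
  mul_le_mul_of_nonneg_left
    (sum_le_sum fun s' _ => mul_le_mul_of_nonneg_left (hV s') (hP0 s a s')) hγ0

theorem Hhat_add_sum_softV_sub_le (hP0 : ∀ s a s', 0 ≤ P s a s') (hγ0 : 0 ≤ γ)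
    {ρ : S × A → ℝ} (hρ : ∀ sa, 0 ≤ ρ sa) (μ0 : S → ℝ) (rbar : S × A → ℝ)
    {α : ℝ} (hα : 0 ≤ α) (hV₁ : ∀ s, 0 ≤ softV Q pol₁ s)
    (hV : ∀ s, softV Q pol₁ s ≤ softV Q pol₂ s) :
    Hhat P γ ρ μ0 rbar α Q pol₂
        + (1 - γ) * ∑ s, μ0 s * (softV Q pol₂ s - softV Q pol₁ s)
      ≤ Hhat P γ ρ μ0 rbar α Q pol₁ := by
  have hW₁ := softW_nonneg hP0 hγ0 hV₁
  have hW := softW_mono hP0 hγ0 hV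
  unfold Hhat
  set W₁ := softW P γ Q pol₁
  set W₂ := softW P γ Q pol₂
  have hlinear : ∑ sa : S × A, ρ sa * (Q sa - W₂ sa.1 sa.2)
      ≤ ∑ sa : S × A, ρ sa * (Q sa - W₁ sa.1 sa.2) := by
    gcongr with sa
    exacts [hρ sa, hW sa.1 sa.2]
  have hpenalty : α * ∑ sa : S × A, ρ sa * ((Q sa - rbar sa) ^ 2 + W₁ sa.1 sa.2 ^ 2
        + 2 * max 0 (rbar sa - Q sa) * W₁ sa.1 sa.2)
      ≤ α * ∑ sa : S × A, ρ sa * ((Q sa - rbar sa) ^ 2 + W₂ sa.1 sa.2 ^ 2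
        + 2 * max 0 (rbar sa - Q sa) * W₂ sa.1 sa.2) := by
    gcongr with sa
    exacts [hρ sa, hW₁ sa.1 sa.2, hW sa.1 sa.2, hW sa.1 sa.2]
  simp only [mul_sub, sum_sub_distrib] at hlinear hpenalty ⊢
  linarith

end Objective

theorem Hhat_minimized_at_softmax_general
    {S A : Type*} [Fintype S] [Fintype A] [Nonempty A]
    (P : S → A → S → ℝ) (hP0 : ∀ s a s', 0 ≤ P s a s')
    (γ : ℝ) (hγ0 : 0 ≤ γ) (hγ1 : γ < 1)
    (ρ : S × A → ℝ) (hρ : ∀ sa, 0 ≤ ρ sa)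
    (μ0 : S → ℝ) (hμ0 : ∀ s, 0 ≤ μ0 s)
    (rbar : S × A → ℝ) (α : ℝ) (hα : 0 ≤ α)
    (Q : S × A → ℝ) (hQ : ∀ sa, 0 ≤ Q sa) :
    (∀ s a, 0 ≤ Real.exp (Q (s, a)) / ∑ a', Real.exp (Q (s, a'))) ∧
    (∀ s, ∑ a, Real.exp (Q (s, a)) / ∑ a', Real.exp (Q (s, a')) = 1) ∧
    (∀ pol : S → A → ℝ, (∀ s a, 0 ≤ pol s a) → (∀ s, ∑ a, pol s a = 1) →
      Hhat P γ ρ μ0 rbar α Q (fun s a => Real.exp (Q (s, a)) / ∑ a', Real.exp (Q (s, a')))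
        ≤ Hhat P γ ρ μ0 rbar α Q pol) ∧
    ((∀ s, 0 < μ0 s) →
      ∀ pol : S → A → ℝ, (∀ s a, 0 ≤ pol s a) → (∀ s, ∑ a, pol s a = 1) →
        pol ≠ (fun s a => Real.exp (Q (s, a)) / ∑ a', Real.exp (Q (s, a'))) →
        Hhat P γ ρ μ0 rbar α Q (fun s a => Real.exp (Q (s, a)) / ∑ a', Real.exp (Q (s, a')))
          < Hhat P γ ρ μ0 rbar α Q pol) := by
  let πQ : S → A → ℝ := fun s => softmax fun a => Q (s, a)
  have hVπQ : ∀ s, softV Q πQ s = log (∑ a, exp (Q (s, a))) := fun s =>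
    sum_softmax_mul_sub_log _
  have hVle : ∀ pol : S → A → ℝ, (∀ s a, 0 ≤ pol s a) →
      (∀ s, ∑ a, pol s a = 1) →
      ∀ s, softV Q pol s ≤ softV Q πQ s := fun pol hpol0 hpol1 s =>
    (hVπQ s).symm ▸ sum_mul_sub_log_le_log_sum_exp _ (hpol0 s) (hpol1 s)
  have hgap : ∀ pol : S → A → ℝ, (∀ s a, 0 ≤ pol s a) →
      (∀ s, ∑ a, pol s a = 1) →
      Hhat P γ ρ μ0 rbar α Q πQ + (1 - γ) * ∑ s, μ0 s * (softV Q πQ s - softV Q pol s)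
        ≤ Hhat P γ ρ μ0 rbar α Q pol := fun pol hpol0 hpol1 =>
    Hhat_add_sum_softV_sub_le hP0 hγ0 hρ μ0 rbar hα
      (fun s => sum_mul_sub_log_nonneg _ (fun a => hQ (s, a)) (hpol0 s) (hpol1 s))
      (hVle pol hpol0 hpol1)
  refine ⟨fun s a => (softmax_pos (fun a => Q (s, a)) a).le,
    fun s => sum_softmax fun a => Q (s, a),
    fun pol hpol0 hpol1 => ?_, fun hμ0pos pol hpol0 hpol1 hne => ?_⟩
  · refine le_trans (le_add_of_nonneg_right ?_) (hgap pol hpol0 hpol1)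
    exact mul_nonneg (by linarith) (sum_nonneg fun s _ =>
      mul_nonneg (hμ0 s) (sub_nonneg.mpr (hVle pol hpol0 hpol1 s)))
  · obtain ⟨s₀, hs₀⟩ := Function.ne_iff.mp hne
    have hV_lt : softV Q pol s₀ < softV Q πQ s₀ :=
      (hVπQ s₀).symm ▸ sum_mul_sub_log_lt_log_sum_exp _ (hpol0 s₀) (hpol1 s₀) hs₀
    refine lt_of_lt_of_le (lt_add_of_pos_right _ ?_) (hgap pol hpol0 hpol1)
    refine mul_pos (by linarith) (sum_pos' (fun s _ => ?_) ⟨s₀, mem_univ _, ?_⟩)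
    · exact mul_nonneg (hμ0 s) (sub_nonneg.mpr (hVle pol hpol0 hpol1 s))
    · exact mul_pos (hμ0pos s₀) (sub_pos.mpr hV_lt)

/-- For every `Q ≥ 0`, the softmax policy
`πQ s a = exp (Q(s,a)) / ∑ a', exp (Q(s,a'))` is a policy and minimizes `π ↦ Ĥ(Q,π)`
over policies; if moreover `μ0 > 0` pointwise, it is the unique minimizer. -/
theorem Hhat_minimized_at_softmax
    {S A : Type*} [Fintype S] [Fintype A] [Nonempty S] [Nonempty A]
    (P : S → A → S → ℝ) (hP0 : ∀ s a s', 0 ≤ P s a s') (hP1 : ∀ s a, ∑ s', P s a s' = 1)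
    (γ : ℝ) (hγ0 : 0 ≤ γ) (hγ1 : γ < 1)
    (ρ : S × A → ℝ) (hρ : ∀ sa, 0 ≤ ρ sa)
    (μ0 : S → ℝ) (hμ0 : ∀ s, 0 ≤ μ0 s)
    (rbar : S × A → ℝ) (α : ℝ) (hα : 0 ≤ α)
    (Q : S × A → ℝ) (hQ : ∀ sa, 0 ≤ Q sa) :
    (∀ s a, 0 ≤ Real.exp (Q (s, a)) / ∑ a', Real.exp (Q (s, a'))) ∧
    (∀ s, ∑ a, Real.exp (Q (s, a)) / ∑ a', Real.exp (Q (s, a')) = 1) ∧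
    (∀ pol : S → A → ℝ, (∀ s a, 0 ≤ pol s a) → (∀ s, ∑ a, pol s a = 1) →
      Hhat P γ ρ μ0 rbar α Q (fun s a => Real.exp (Q (s, a)) / ∑ a', Real.exp (Q (s, a')))
        ≤ Hhat P γ ρ μ0 rbar α Q pol) ∧
    ((∀ s, 0 < μ0 s) →
      ∀ pol : S → A → ℝ, (∀ s a, 0 ≤ pol s a) → (∀ s, ∑ a, pol s a = 1) →
        pol ≠ (fun s a => Real.exp (Q (s, a)) / ∑ a', Real.exp (Q (s, a'))) →
        Hhat P γ ρ μ0 rbar α Q (fun s a => Real.exp (Q (s, a)) / ∑ a', Real.exp (Q (s, a')))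
          < Hhat P γ ρ μ0 rbar α Q pol) :=
  Hhat_minimized_at_softmax_general P hP0 γ hγ0 hγ1 ρ hρ μ0 hμ0 rbar α hα Q hQ
end
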